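/- For every integer n ≥ 3, the sum over k from 3 to n of H_{n−k}/((k+1)k(k−1)(k−2)) equals ((n^3−n−12)/(18(n−1)n(n+1)))·H_{n+1} − (9n^5+9n^4−41n^3−81n^2+32n+24)/(36(n−1)^2 n^2 (n+1)^2). -/

import Mathlib

/-- The `n`-th harmonic number `H_n = ∑_{k=1}^n 1/k`, with `H_0 = 0`. -/
def H (n : ℕ) : ℚ := ∑ k ∈ Finset.range n, 1 / ((k : ℚ) + 1)

/-- The generalized harmonic number of order 2, `H_n^{(2)} = ∑_{k=1}^n 1/k^2`, with `H_0^{(2)} = 0`. -/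
def H2 (n : ℕ) : ℚ := ∑ k ∈ Finset.range n, 1 / ((k : ℚ) + 1) ^ 2

/-!
Reindexing by `k = j + 3` turns the sum into the convolution
`T m = ∑_{j ≤ m} H_{m-j} / ((j+1)(j+2)(j+3)(j+4))` with `n = m + 3`. As `H_{m+1-j} - H_{m-j} = 1/(m+1-j)`,
the increment `T (m+1) - T m` is `∑_{j ≤ m} 1/((m+1-j)(j+1)(j+2)(j+3)(j+4))`, and partial fractions in `j`
evaluate it through `H_{m+1}, …, H_{m+4}`. The closed form obeys the same recursion and vanishes at `n = 3`.
-/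

open Finset

lemma H_zero : H 0 = 0 := by simp [H]

lemma H_succ (n : ℕ) : H (n + 1) = H n + 1 / ((n : ℚ) + 1) := by
  simp [H, sum_range_succ]

lemma sum_range_one_div_add (n d : ℕ) {c : ℚ} (hc : (d : ℚ) + 1 = c) :
    ∑ j ∈ range n, 1 / ((j : ℚ) + c) = H (n + d) - H d := by
  rw [H, H, add_comm n, sum_range_add, add_sub_cancel_left]
  refine sum_congr rfl fun j _ => ?_
  push_cast
  rw [← hc]
  ring

lemma sum_range_one_div_succ_sub (n : ℕ) :
    ∑ j ∈ range (n + 1), 1 / ((n : ℚ) + 1 - j) = H (n + 1) := by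
  rw [H, ← sum_range_reflect]
  refine sum_congr rfl fun j hj => ?_
  obtain ⟨k, rfl⟩ := Nat.exists_eq_add_of_le (Nat.lt_succ_iff.mp (mem_range.mp hj))
  rw [show j + k + 1 - 1 - j = k by omega]
  push_cast
  ring

lemma sum_range_H_sub_div_succ (p : ℕ → ℚ) (m : ℕ) :
    ∑ j ∈ range (m + 2), H (m + 1 - j) / p j =
      ∑ j ∈ range (m + 1), H (m - j) / p j
        + ∑ j ∈ range (m + 1), 1 / (((m : ℚ) + 1 - j) * p j) := by
  rw [sum_range_succ _ (m + 1), Nat.sub_self, H_zero, zero_div, add_zero, ← sum_add_distrib]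
  refine sum_congr rfl fun j hj => ?_
  have hj : j ≤ m := Nat.lt_succ_iff.mp (mem_range.mp hj)
  rw [Nat.sub_add_comm hj, H_succ, Nat.cast_sub hj, add_div, div_div]
  ring

/-- The coefficients are the residues at `x = -1, -2, -3, -4` and `x = c`. -/
lemma one_div_sub_mul_quartic {x c : ℚ} (hx : 0 ≤ x) (hxc : x < c) :
    1 / ((c - x) * ((x + 1) * (x + 2) * (x + 3) * (x + 4))) =
      1 / (6 * (c + 1)) * (1 / (x + 1)) - 1 / (2 * (c + 2)) * (1 / (x + 2))
        + 1 / (2 * (c + 3)) * (1 / (x + 3)) - 1 / (6 * (c + 4)) * (1 / (x + 4))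
        + 1 / ((c + 1) * (c + 2) * (c + 3) * (c + 4)) * (1 / (c - x)) := by
  have : c - x ≠ 0 := by linarith
  have : c + 1 ≠ 0 := by linarith
  have : c + 2 ≠ 0 := by linarith
  have : c + 3 ≠ 0 := by linarith
  have : c + 4 ≠ 0 := by linarith
  have : x + 1 ≠ 0 := by linarith
  have : x + 2 ≠ 0 := by linarith
  have : x + 3 ≠ 0 := by linarith
  have : x + 4 ≠ 0 := by linarith
  field_simp
  ring

lemma sum_range_one_div_sub_mul_quartic (m : ℕ) :
    ∑ j ∈ range (m + 1),
        1 / (((m : ℚ) + 1 - j) * (((j : ℚ) + 1) * ((j : ℚ) + 2) * ((j : ℚ) + 3) * ((j : ℚ) + 4))) =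
      1 / (6 * ((m : ℚ) + 2)) * H (m + 1) - 1 / (2 * ((m : ℚ) + 3)) * (H (m + 2) - H 1)
        + 1 / (2 * ((m : ℚ) + 4)) * (H (m + 3) - H 2) - 1 / (6 * ((m : ℚ) + 5)) * (H (m + 4) - H 3)
        + 1 / (((m : ℚ) + 2) * ((m : ℚ) + 3) * ((m : ℚ) + 4) * ((m : ℚ) + 5)) * H (m + 1) := by
  rw [sum_congr rfl fun j hj => one_div_sub_mul_quartic (Nat.cast_nonneg j)
    (by have := mem_range.mp hj; exact_mod_cast this)]
  simp only [sum_add_distrib, sum_sub_distrib, ← mul_sum]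
  rw [sum_range_one_div_succ_sub, sum_range_one_div_add _ 0 (by norm_num),
    sum_range_one_div_add _ 1 (by norm_num), sum_range_one_div_add _ 2 (by norm_num),
    sum_range_one_div_add _ 3 (by norm_num), H_zero]
  ring

def harmonicConvolutionClosedForm (n : ℕ) : ℚ :=
  (((n : ℚ) ^ 3 - (n : ℚ) - 12) / (18 * ((n : ℚ) - 1) * (n : ℚ) * ((n : ℚ) + 1))) * H (n + 1)
    - (9 * (n : ℚ) ^ 5 + 9 * (n : ℚ) ^ 4 - 41 * (n : ℚ) ^ 3 - 81 * (n : ℚ) ^ 2 + 32 * (n : ℚ) + 24)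
      / (36 * ((n : ℚ) - 1) ^ 2 * (n : ℚ) ^ 2 * ((n : ℚ) + 1) ^ 2)

lemma harmonicConvolutionClosedForm_three : harmonicConvolutionClosedForm 3 = 0 := by
  norm_num [harmonicConvolutionClosedForm, H, sum_range_succ]

lemma harmonicConvolutionClosedForm_add_four (m : ℕ) :
    harmonicConvolutionClosedForm (m + 4) = harmonicConvolutionClosedForm (m + 3)
      + (1 / (6 * ((m : ℚ) + 2)) * H (m + 1) - 1 / (2 * ((m : ℚ) + 3)) * (H (m + 2) - H 1)
        + 1 / (2 * ((m : ℚ) + 4)) * (H (m + 3) - H 2) - 1 / (6 * ((m : ℚ) + 5)) * (H (m + 4) - H 3)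
        + 1 / (((m : ℚ) + 2) * ((m : ℚ) + 3) * ((m : ℚ) + 4) * ((m : ℚ) + 5)) * H (m + 1)) := by
  obtain ⟨h1, h2, h3⟩ : H 1 = 1 ∧ H 2 = 3 / 2 ∧ H 3 = 11 / 6 := by norm_num [H, sum_range_succ]
  simp only [harmonicConvolutionClosedForm]
  rw [H_succ (m + 4), H_succ (m + 3), H_succ (m + 2), H_succ (m + 1), h1, h2, h3]
  push_cast
  have hm : (0 : ℚ) ≤ m := m.cast_nonneg
  generalize (m : ℚ) = x at hm ⊢
  generalize H (m + 1) = h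
  norm_num only [add_assoc, add_sub_assoc]
  have : x + 1 ≠ 0 := by linarith
  have : x + 2 ≠ 0 := by linarith
  have : x + 3 ≠ 0 := by linarith
  have : x + 4 ≠ 0 := by linarith
  have : x + 5 ≠ 0 := by linarith
  field_simp
  ring

lemma sum_range_H_sub_div_quartic (m : ℕ) :
    ∑ j ∈ range (m + 1), H (m - j) / (((j : ℚ) + 1) * ((j : ℚ) + 2) * ((j : ℚ) + 3) * ((j : ℚ) + 4)) =
      harmonicConvolutionClosedForm (m + 3) := by
  induction m with
  | zero => simp [H_zero, harmonicConvolutionClosedForm_three]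
  | succ m ih =>
    rw [sum_range_H_sub_div_succ, ih, sum_range_one_div_sub_mul_quartic,
      harmonicConvolutionClosedForm_add_four]

theorem stmt_19 (n : ℕ) (hn : 3 ≤ n) :
    ∑ k ∈ Finset.Icc 3 n, H (n - k) / (((k : ℚ) + 1) * (k : ℚ) * ((k : ℚ) - 1) * ((k : ℚ) - 2)) =
      (((n : ℚ) ^ 3 - (n : ℚ) - 12) / (18 * ((n : ℚ) - 1) * (n : ℚ) * ((n : ℚ) + 1))) * H (n + 1)
        - (9 * (n : ℚ) ^ 5 + 9 * (n : ℚ) ^ 4 - 41 * (n : ℚ) ^ 3 - 81 * (n : ℚ) ^ 2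
            + 32 * (n : ℚ) + 24)
          / (36 * ((n : ℚ) - 1) ^ 2 * (n : ℚ) ^ 2 * ((n : ℚ) + 1) ^ 2) := by
  obtain ⟨m, rfl⟩ := Nat.exists_eq_add_of_le' hn
  change _ = harmonicConvolutionClosedForm (m + 3)
  rw [← sum_range_H_sub_div_quartic, ← Ico_add_one_right_eq_Icc, sum_Ico_eq_sum_range]
  refine sum_congr (by simp) fun j _ => ?_
  rw [show m + 3 - (3 + j) = m - j by omega]
  push_cast
  ring
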